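/- The double integral ∫₀^π ∫₀^π (1/π²) · ln(4 sin²(q₁/2) + 4 sin²(q₂/2)) dq₁ dq₂ equals 4G/π, where G = Σ_{k=0}^∞ (−1)^k/(2k+1)² is Catalan's constant. -/

import Mathlib

/-!
With `s = sin (q₁/2)` and `t = 2 arsinh s`,
`4 s² + 4 sin²(q/2) = 2 cosh t - 2 cos q = eᵗ |e^{iq} - e^{-t}|²`, and since the circle average of
`log |z - a|` vanishes for `|a| ≤ 1` (Jensen), the inner integral is `2π arsinh s`.
It remains to see that `∫₀^{π/2} arsinh (sin t) dt = G`: writing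
`arsinh y = ∫₀¹ y / √(1 + s² y²) ds`
and swapping the integrals turns it into `∫₀¹ arctan s / s ds`, which is `G` term by term from the
arctan series.
-/

open MeasureTheory Real intervalIntegral

/-- Catalan's constant `G = Σ_{k≥0} (−1)^k/(2k+1)²`. -/
noncomputable def catalan' : ℝ := ∑' k : ℕ, (-1 : ℝ) ^ k / (2 * (k : ℝ) + 1) ^ 2

theorem integral_comp_cos_zero_two_pi_eq_two_mul {f : ℝ → ℝ}
    (hf : IntervalIntegrable (fun θ => f (cos θ)) volume 0 (2 * π)) :
    ∫ θ in 0..2 * π, f (cos θ) = 2 * ∫ θ in 0..π, f (cos θ) := by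
  have hπ : π ≤ 2 * π := by linarith [pi_pos]
  have h₁ : IntervalIntegrable (fun θ => f (cos θ)) volume 0 π :=
    hf.mono_set (Set.uIcc_subset_uIcc (by simp) (by simp [pi_pos.le, hπ]))
  have h₂ : IntervalIntegrable (fun θ => f (cos θ)) volume π (2 * π) :=
    hf.mono_set (Set.uIcc_subset_uIcc (by simp [pi_pos.le, hπ]) (by simp))
  have reflect : ∫ θ in π..2 * π, f (cos θ) = ∫ θ in 0..π, f (cos θ) := by
    have h := integral_comp_sub_left (fun θ => f (cos θ)) (2 * π) (a := 0) (b := π)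
    simp only [cos_two_pi_sub, sub_zero] at h
    rwa [show 2 * π - π = π by ring, eq_comm] at h
  rw [← integral_add_adjacent_intervals h₁ h₂, reflect, two_mul]

theorem two_mul_cosh_sub_two_mul_cos_eq_exp_mul_norm_sq (t θ : ℝ) :
    2 * cosh t - 2 * cos θ = exp t * ‖circleMap 0 1 θ - (exp (-t) : ℝ)‖ ^ 2 := by
  rw [circleMap_zero, Complex.sq_norm, Complex.normSq_apply]
  simp only [Complex.sub_re, Complex.sub_im, Complex.ofReal_one, one_mul,
    Complex.exp_ofReal_mul_I_re, Complex.exp_ofReal_mul_I_im, Complex.ofReal_re, Complex.ofReal_im]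
  rw [cosh_eq, exp_neg]
  have := sin_sq_add_cos_sq θ
  field_simp
  linear_combination -exp t ^ 2 * this

theorem integral_log_two_mul_cosh_sub_two_mul_cos {t : ℝ} (ht : 0 < t) :
    ∫ θ in 0..π, log (2 * cosh t - 2 * cos θ) = π * t := by
  have hpos : ∀ θ, 0 < 2 * cosh t - 2 * cos θ := fun θ => by
    nlinarith [one_lt_cosh.2 ht.ne', cos_le_one θ]
  have hlog : ∀ θ, log (2 * cosh t - 2 * cos θ)
      = t + 2 * log ‖circleMap 0 1 θ - (exp (-t) : ℝ)‖ := fun θ => by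
    have h := hpos θ
    rw [two_mul_cosh_sub_two_mul_cos_eq_exp_mul_norm_sq] at h ⊢
    rw [log_mul (exp_pos t).ne' (pos_of_mul_pos_right h (exp_pos t).le).ne', log_exp, log_pow]
    push_cast
    ring
  have hcircle : ∫ θ in 0..2 * π, log ‖circleMap 0 1 θ - (exp (-t) : ℝ)‖ = 0 := by
    have h := circleAverage_log_norm_sub_const_eq_posLog (a := (exp (-t) : ℂ))
    have h_norm : |‖(exp (-t) : ℂ)‖| ≤ 1 := by
      rw [Complex.norm_real, abs_norm, norm_of_nonneg (exp_pos _).le]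
      exact exp_le_one_iff.2 (by linarith)
    rw [circleAverage_def, (posLog_eq_zero_iff _).2 h_norm, smul_eq_mul, mul_eq_zero] at h
    exact h.resolve_left (by positivity)
  have hcont : Continuous fun θ => log (2 * cosh t - 2 * cos θ) :=
    (by fun_prop : Continuous fun θ => 2 * cosh t - 2 * cos θ).log fun θ => (hpos θ).ne'
  have hfull : ∫ θ in 0..2 * π, log (2 * cosh t - 2 * cos θ) = 2 * π * t := by
    simp_rw [hlog]
    rw [integral_add intervalIntegrable_const ((circleIntegrable_log_norm_sub_const 1).const_mul 2),
      intervalIntegral.integral_const_mul, hcircle]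
    simp
  linarith [integral_comp_cos_zero_two_pi_eq_two_mul (f := fun x => log (2 * cosh t - 2 * x))
    (hcont.intervalIntegrable _ _)]

theorem cos_eq_one_sub_two_mul_sin_half_sq (q : ℝ) : cos q = 1 - 2 * sin (q / 2) ^ 2 := by
  have h := cos_two_mul' (q / 2)
  rw [mul_div_cancel₀ q two_ne_zero] at h
  linear_combination h + sin_sq_add_cos_sq (q / 2)

theorem integral_log_four_mul_sq_add_four_mul_sin_half_sq {s : ℝ} (hs : 0 < s) :
    ∫ q in 0..π, log (4 * s ^ 2 + 4 * sin (q / 2) ^ 2) = 2 * π * arsinh s := by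
  have h : ∀ q, 4 * s ^ 2 + 4 * sin (q / 2) ^ 2 = 2 * cosh (2 * arsinh s) - 2 * cos q := fun q => by
    rw [cosh_two_mul, cosh_sq, sinh_arsinh, cos_eq_one_sub_two_mul_sin_half_sq]
    ring
  simp_rw [h]
  rw [integral_log_two_mul_cosh_sub_two_mul_cos (mul_pos two_pos (arsinh_pos_iff.2 hs))]
  ring

theorem summable_one_div_two_mul_add_one_sq :
    Summable fun k : ℕ => 1 / (2 * (k : ℝ) + 1) ^ 2 := by
  have h := ((summable_one_div_nat_pow (p := 2)).2 one_lt_two).comp_injective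
    (i := fun k : ℕ => 2 * k + 1) fun a b h => by simpa using h
  simpa [Function.comp_def] using h

theorem hasSum_arctan_div {s : ℝ} (hs₀ : s ≠ 0) (hs₁ : ‖s‖ < 1) :
    HasSum (fun k : ℕ => (-1) ^ k * s ^ (2 * k) / (2 * k + 1)) (arctan s / s) := by
  refine ((hasSum_arctan hs₁).div_const s).congr_fun fun k => ?_
  rw [pow_succ]
  field_simp
  push_cast
  ring

theorem hasSum_integral_arctan_div :
    HasSum (fun k : ℕ => (-1 : ℝ) ^ k / (2 * (k : ℝ) + 1) ^ 2) (∫ s in 0..1, arctan s / s) := by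
  set F : ℕ → ℝ → ℝ := fun k s => (-1) ^ k * s ^ (2 * k) / (2 * k + 1)
  have hF_cont : ∀ k, Continuous (F k) := fun k => by fun_prop
  have hF_integral : ∀ k, ∫ s in 0..1, F k s = (-1) ^ k / (2 * (k : ℝ) + 1) ^ 2 := fun k => by
    simp only [F, intervalIntegral.integral_div, intervalIntegral.integral_const_mul, integral_pow]
    norm_num
    field_simp
  have hF_norm : ∀ k, ∫ s in 0..1, ‖F k s‖ = 1 / (2 * (k : ℝ) + 1) ^ 2 := fun k => by
    have h : ∀ s, ‖F k s‖ = s ^ (2 * k) / (2 * k + 1) := fun s => by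
      simp only [F, norm_div, norm_mul, norm_pow, norm_neg, norm_one, one_pow, one_mul,
        Real.norm_eq_abs, pow_mul, sq_abs, abs_of_pos (by positivity : (0 : ℝ) < 2 * k + 1)]
    simp only [h, intervalIntegral.integral_div, integral_pow]
    norm_num
    field_simp
  have h := hasSum_integral_of_summable_integral_norm (μ := volume.restrict (Set.Ioc 0 1))
    (fun k => (hF_cont k).integrableOn_Ioc)
    (summable_one_div_two_mul_add_one_sq.congr fun k => by
      rw [← hF_norm, integral_of_le zero_le_one])
  simp only [← integral_of_le zero_le_one, hF_integral] at h
  have h_tsum : ∫ s in 0..1, ∑' k, F k s = ∫ s in 0..1, arctan s / s := by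
    rw [integral_of_le zero_le_one, integral_of_le zero_le_one, integral_Ioc_eq_integral_Ioo,
      integral_Ioc_eq_integral_Ioo]
    exact setIntegral_congr_fun measurableSet_Ioo fun s hs =>
      (hasSum_arctan_div hs.1.ne' (by rw [norm_of_nonneg hs.1.le]; exact hs.2)).tsum_eq
  rwa [h_tsum] at h

theorem intervalIntegral_integral_swap_of_continuous {E : Type*} [NormedAddCommGroup E]
    [NormedSpace ℝ E] {f : ℝ → ℝ → E} (hf : Continuous (Function.uncurry f))
    {a b c d : ℝ} (hab : a ≤ b) (hcd : c ≤ d) :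
    ∫ x in a..b, ∫ y in c..d, f x y = ∫ y in c..d, ∫ x in a..b, f x y := by
  have hint : Integrable (Function.uncurry f)
      ((volume.restrict (Set.Ioc a b)).prod (volume.restrict (Set.Ioc c d))) := by
    rw [Measure.prod_restrict, ← Measure.volume_eq_prod]
    exact (hf.continuousOn.integrableOn_compact (isCompact_Icc.prod isCompact_Icc)).mono_set
      (Set.prod_mono Set.Ioc_subset_Icc_self Set.Ioc_subset_Icc_self)
  simp only [integral_of_le hab, integral_of_le hcd]
  exact integral_integral_swap hint

theorem arsinh_eq_integral (y : ℝ) :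
    arsinh y = ∫ s in 0..1, y / √(1 + (s * y) ^ 2) := by
  have hderiv : ∀ s ∈ Set.uIcc (0 : ℝ) 1,
      HasDerivAt (fun s => arsinh (s * y)) (y / √(1 + (s * y) ^ 2)) s := fun s _ => by
    simpa [div_eq_inv_mul, Function.comp_def] using
      (hasDerivAt_arsinh (s * y)).comp s ((hasDerivAt_id s).mul_const y)
  rw [integral_eq_sub_of_hasDerivAt hderiv
    ((continuous_const.div (by fun_prop) fun s => by positivity).intervalIntegrable _ _)]
  simp

theorem integral_sin_div_sqrt_one_add_mul_sin_sq {s : ℝ} (hs : 0 < s) :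
    ∫ t in 0..π / 2, sin t / √(1 + (s * sin t) ^ 2) = arctan s / s := by
  set r := √(1 + s ^ 2)
  have hr : r ^ 2 = 1 + s ^ 2 := sq_sqrt (by positivity)
  have hr_pos : 0 < r := sqrt_pos.2 (by positivity)
  -- the antiderivative comes from the substitution `u = cos t`
  have hderiv : ∀ t ∈ Set.uIcc (0 : ℝ) (π / 2),
      HasDerivAt (fun t => -(1 / s) * arcsin (s * cos t / r))
        (sin t / √(1 + (s * sin t) ^ 2)) t := fun t _ => by
    have hu : (s * cos t / r) ^ 2 < 1 := by
      rw [div_pow, hr, div_lt_one (by positivity)]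
      nlinarith [cos_sq_le_one t]
    have hsqrt : r * √(1 - (s * cos t / r) ^ 2) = √(1 + (s * sin t) ^ 2) := by
      rw [← sqrt_mul (by positivity)]
      congr 1
      field_simp
      rw [hr]
      linear_combination -(s ^ 2 + s ^ 4) * sin_sq_add_cos_sq t
    have hu₁ : s * cos t / r ≠ 1 := fun h => by simp [h] at hu
    have hu₂ : s * cos t / r ≠ -1 := fun h => by simp [h] at hu
    refine (((hasDerivAt_arcsin hu₂ hu₁).comp t
      (((hasDerivAt_cos t).const_mul s).div_const r)).const_mul (-(1 / s))).congr_deriv ?_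
    rw [← hsqrt]
    field_simp
  rw [integral_eq_sub_of_hasDerivAt hderiv
    ((continuous_sin.div (by fun_prop) fun t => by positivity).intervalIntegrable _ _)]
  simp [arctan_eq_arcsin, r]
  field_simp

theorem integral_arsinh_sin_eq_integral_arctan_div :
    ∫ t in 0..π / 2, arsinh (sin t) = ∫ s in 0..1, arctan s / s := by
  have hcont : Continuous (Function.uncurry fun t s : ℝ => sin t / √(1 + (s * sin t) ^ 2)) :=
    (by fun_prop : Continuous fun p : ℝ × ℝ => sin p.1).div (by fun_prop) fun p => by positivity
  calc ∫ t in 0..π / 2, arsinh (sin t)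
      = ∫ t in 0..π / 2, ∫ s in 0..1, sin t / √(1 + (s * sin t) ^ 2) := by
        simp_rw [arsinh_eq_integral]
    _ = ∫ s in 0..1, ∫ t in 0..π / 2, sin t / √(1 + (s * sin t) ^ 2) :=
        intervalIntegral_integral_swap_of_continuous hcont (by positivity) zero_le_one
    _ = ∫ s in 0..1, arctan s / s :=
        integral_congr_ae (ae_of_all _ fun s hs => integral_sin_div_sqrt_one_add_mul_sin_sq
          (by rw [Set.uIoc_of_le zero_le_one] at hs; exact hs.1))

theorem U2_at_zero :
    ∫ q1 in (0:ℝ)..Real.pi, ∫ q2 in (0:ℝ)..Real.pi,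
        (1 / Real.pi ^ 2) * Real.log (4 * Real.sin (q1 / 2) ^ 2 + 4 * Real.sin (q2 / 2) ^ 2)
      = 4 * catalan' / Real.pi := by
  have inner : ∀ q1 ∈ Set.uIoc 0 π, ∫ q2 in 0..π,
      (1 / π ^ 2) * log (4 * sin (q1 / 2) ^ 2 + 4 * sin (q2 / 2) ^ 2)
        = 2 / π * arsinh (sin (q1 / 2)) := fun q1 hq1 => by
    rw [Set.uIoc_of_le pi_pos.le] at hq1
    rw [intervalIntegral.integral_const_mul, integral_log_four_mul_sq_add_four_mul_sin_half_sq
      (sin_pos_of_pos_of_lt_pi (by linarith [hq1.1]) (by linarith [hq1.2, pi_pos]))]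
    field_simp
  have outer : ∫ q1 in 0..π, arsinh (sin (q1 / 2)) = 2 * catalan' := by
    rw [integral_comp_div (fun t => arsinh (sin t)) two_ne_zero, zero_div, smul_eq_mul,
      integral_arsinh_sin_eq_integral_arctan_div, catalan', hasSum_integral_arctan_div.tsum_eq]
  rw [integral_congr_ae (ae_of_all _ inner), intervalIntegral.integral_const_mul, outer]
  ring
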